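/- arXiv:2508.03693 — 3 statements merged into one kernel-verified Lean document; each statement's English description precedes it below -/
import Mathlib

section
/- Let S and A be finite nonempty sets, γ ∈ (0,1), r : S×A → ℝ, and p : S×A → PMF S a transition kernel. Let π : S → A be a deterministic policy with state-value function V^π : S → ℝ satisfying the Bellman equation V^π(s) = r(s, π(s)) + γ·𝔼_{s'~p(s,π(s))}[V^π(s')] for all s, and let V* : S → ℝ and Q* : S×A → ℝ satisfy Q*(s,a) = r(s,a) + γ·𝔼_{s'~p(s,a)}[V*(s')] and V*(s) = max_{a∈A} Q*(s,a) for all s, a, and suppose V^π(s) ≤ V*(s) for all s. Let π* : S → A satisfy Q*(s, π*(s)) = V*(s) for all s, let ρ be a PMF on S, and define the regret R^π = 𝔼_{s₀~ρ}[V*(s₀) − V^π(s₀)]. Then there exists a state s ∈ S such that Q*(s, π*(s)) − Q*(s, π(s)) ≥ (1 − γ)·R^π. -/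
/-- Lemma 1 of the paper: if a deterministic policy `π` has regret `Rπ` (w.r.t. the
initial-state distribution `ρ`), then there is a state where the gap in optimal
Q-values between the optimal action and the policy's action is at least `(1-γ)·Rπ`. -/
theorem exists_state_qgap_ge_regret
    {S A : Type*} [Fintype S] [Nonempty S] [Fintype A] [Nonempty A]
    (γ : ℝ) (hγ0 : 0 < γ) (hγ1 : γ < 1)
    (r : S → A → ℝ) (p : S → A → PMF S)
    (π : S → A) (Vπ : S → ℝ)
    (hVπ : ∀ s, Vπ s = r s (π s) + γ * ∑ s', ((p s (π s)) s').toReal * Vπ s')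
    (Vstar : S → ℝ) (Qstar : S → A → ℝ)
    (hQ : ∀ s a, Qstar s a = r s a + γ * ∑ s', ((p s a) s').toReal * Vstar s')
    (hV : ∀ s, Vstar s = Finset.univ.sup' Finset.univ_nonempty (fun a => Qstar s a))
    (hle : ∀ s, Vπ s ≤ Vstar s)
    (πstar : S → A) (hπstar : ∀ s, Qstar s (πstar s) = Vstar s)
    (ρ : PMF S)
    (Rπ : ℝ) (hR : Rπ = ∑ s₀, (ρ s₀).toReal * (Vstar s₀ - Vπ s₀)) :
    ∃ s : S, Qstar s (πstar s) - Qstar s (π s) ≥ (1 - γ) * Rπ := by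
  set g : S → ℝ := fun s => Vstar s - Vπ s with hg
  obtain ⟨smax, -, hsmax⟩ := Finset.exists_mem_eq_sup' (Finset.univ_nonempty (α := S)) g
  set M : ℝ := g smax with hMdef
  have hM : ∀ s, g s ≤ M := fun s => hsmax ▸ Finset.le_sup' g (Finset.mem_univ s)
  have hM0 : 0 ≤ M := sub_nonneg.mpr (hle smax)
  -- For any PMF q, ∑ q·g ≤ M
  have hsum : ∀ q : PMF S, ∑ s', (q s').toReal * g s' ≤ M := by
    intro q
    have hone : ∑ s', (q s').toReal = 1 := by
      have h := q.tsum_coe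
      rw [tsum_fintype] at h
      rw [← ENNReal.toReal_sum (fun s' _ => (q.apply_ne_top s'))]
      rw [h]; simp
    calc ∑ s', (q s').toReal * g s'
        ≤ ∑ s', (q s').toReal * M :=
          Finset.sum_le_sum fun s' _ =>
            mul_le_mul_of_nonneg_left (hM s') ENNReal.toReal_nonneg
      _ = (∑ s', (q s').toReal) * M := by rw [Finset.sum_mul]
      _ = M := by rw [hone, one_mul]
  -- Bellman gap at smax
  have hgap : Qstar smax (π smax) - Vπ smax
      = γ * ∑ s', ((p smax (π smax)) s').toReal * g s' := by
    rw [hQ smax (π smax), hVπ smax]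
    have : ∑ s', ((p smax (π smax)) s').toReal * g s'
        = (∑ s', ((p smax (π smax)) s').toReal * Vstar s')
          - ∑ s', ((p smax (π smax)) s').toReal * Vπ s' := by
      rw [← Finset.sum_sub_distrib]
      exact Finset.sum_congr rfl fun s' _ => by simp [hg]; ring
    rw [this]; ring
  have hMle : M ≤ (Qstar smax (πstar smax) - Qstar smax (π smax)) + γ * M := by
    have h1 : M = (Qstar smax (πstar smax) - Qstar smax (π smax))
        + (Qstar smax (π smax) - Vπ smax) := by
      rw [hπstar smax]; simp [hMdef, hg]
    rw [h1, hgap]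
    have := hsum (p smax (π smax))
    nlinarith
  have hΔ : (1 - γ) * M ≤ Qstar smax (πstar smax) - Qstar smax (π smax) := by
    nlinarith
  refine ⟨smax, ?_⟩
  have hRle : Rπ ≤ M := by rw [hR]; exact hsum ρ
  have h1γ : 0 < 1 - γ := by linarith
  calc (1 - γ) * Rπ ≤ (1 - γ) * M := by nlinarith
    _ ≤ _ := hΔ
end

section
/- Let S and A be finite nonempty sets, γ ∈ (0,1), p : S×A → PMF S a transition kernel, ρ a PMF on S, and π : S → A a fixed deterministic policy. Let (Ω, 𝓕, μ) be a probability space, and for each ω ∈ Ω let r_ω : S×A → ℝ be a reward function with associated functions V^π_ω, V*_ω : S → ℝ and Q*_ω : S×A → ℝ satisfying, for all s and a: V^π_ω(s) = r_ω(s, π(s)) + γ·𝔼_{s'~p(s,π(s))}[V^π_ω(s')], Q*_ω(s,a) = r_ω(s,a) + γ·𝔼_{s'~p(s,a)}[V*_ω(s')], V*_ω(s) = max_{a∈A} Q*_ω(s,a), and V^π_ω(s) ≤ V*_ω(s); assume ω ↦ V*_ω(s), ω ↦ Q*_ω(s,a) and ω ↦ V^π_ω(s) are measurable for each s, a. Define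 the regret R(ω) = 𝔼_{s₀~ρ}[V*_ω(s₀) − V^π_ω(s₀)]. If c ≥ 0 and δ ≥ 0 satisfy μ{ω : R(ω) ≥ c} ≥ δ, then there exists a state s ∈ S such that μ{ω : V*_ω(s) − Q*_ω(s, π(s)) ≥ (1−γ)·c} ≥ δ/|S|. -/
open MeasureTheory

lemma pmf_fin_sum_toReal {S : Type*} [Fintype S] (q : PMF S) :
    ∑ s, (q s).toReal = 1 := by
  have h := q.tsum_coe
  rw [tsum_fintype] at h
  rw [← ENNReal.toReal_sum (fun a _ => q.apply_ne_top a), h, ENNReal.toReal_one]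

/-- Lemma 2 of the paper: if, under the posterior `μ` over rewards, the regret of the
fixed policy `π` is at least `c` with probability at least `δ`, then there exists a
state `s` where the immediate regret `V*(s) - Q*(s, π(s))` is at least `(1-γ)·c` with
probability at least `δ/|S|`. -/
theorem exists_state_prob_immediate_regret_ge
    {S A : Type*} [Fintype S] [Nonempty S] [Fintype A] [Nonempty A]
    (γ : ℝ) (hγ0 : 0 < γ) (hγ1 : γ < 1)
    (p : S → A → PMF S) (ρ : PMF S) (π : S → A)
    {Ω : Type*} [MeasurableSpace Ω] (μ : Measure Ω) [IsProbabilityMeasure μ]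
    (r : Ω → S → A → ℝ)
    (Vπ : Ω → S → ℝ) (Vstar : Ω → S → ℝ) (Qstar : Ω → S → A → ℝ)
    (hVπ : ∀ ω s, Vπ ω s = r ω s (π s) + γ * ∑ s', ((p s (π s)) s').toReal * Vπ ω s')
    (hQ : ∀ ω s a, Qstar ω s a = r ω s a + γ * ∑ s', ((p s a) s').toReal * Vstar ω s')
    (hV : ∀ ω s, Vstar ω s = Finset.univ.sup' Finset.univ_nonempty (fun a => Qstar ω s a))
    (hle : ∀ ω s, Vπ ω s ≤ Vstar ω s)
    (hmV : ∀ s, Measurable (fun ω => Vstar ω s))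
    (hmQ : ∀ s a, Measurable (fun ω => Qstar ω s a))
    (hmVπ : ∀ s, Measurable (fun ω => Vπ ω s))
    (R : Ω → ℝ) (hR : ∀ ω, R ω = ∑ s₀, (ρ s₀).toReal * (Vstar ω s₀ - Vπ ω s₀))
    (c δ : ℝ) (hc : 0 ≤ c) (hδ : 0 ≤ δ)
    (h : (μ {ω | R ω ≥ c}).toReal ≥ δ) :
    ∃ s : S, (μ {ω | Vstar ω s - Qstar ω s (π s) ≥ (1 - γ) * c}).toReal
      ≥ δ / (Fintype.card S : ℝ) := by
  -- pointwise step: if R ω ≥ c, some state has immediate regret ≥ (1-γ)c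
  have key : ∀ ω, R ω ≥ c → ∃ s, Vstar ω s - Qstar ω s (π s) ≥ (1 - γ) * c := by
    intro ω hRc
    set D : S → ℝ := fun s => Vstar ω s - Vπ ω s with hDdef
    have hD0 : ∀ s, 0 ≤ D s := fun s => sub_nonneg.mpr (hle ω s)
    set M : ℝ := Finset.univ.sup' Finset.univ_nonempty D with hMdef
    have hDM : ∀ s, D s ≤ M := fun s => Finset.le_sup' D (Finset.mem_univ s)
    have hM0 : 0 ≤ M := by
      obtain ⟨s⟩ := (inferInstance : Nonempty S)
      exact le_trans (hD0 s) (hDM s)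
    -- each D s ≤ gap s + γ M
    have hstep : ∀ s, D s ≤ (Vstar ω s - Qstar ω s (π s)) + γ * M := by
      intro s
      have h1 : Qstar ω s (π s) - Vπ ω s
          = γ * ∑ s', ((p s (π s)) s').toReal * D s' := by
        rw [hQ ω s (π s), hVπ ω s]
        have heq : ∑ s', ((p s (π s)) s').toReal * D s'
            = ∑ s', (((p s (π s)) s').toReal * Vstar ω s'
              - ((p s (π s)) s').toReal * Vπ ω s') :=
          Finset.sum_congr rfl (fun x _ => by simp only [hDdef]; ring)
        rw [heq, Finset.sum_sub_distrib]
        ring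
      have h2 : ∑ s', ((p s (π s)) s').toReal * D s' ≤ M := by
        calc ∑ s', ((p s (π s)) s').toReal * D s'
            ≤ ∑ s', ((p s (π s)) s').toReal * M := by
              apply Finset.sum_le_sum
              intro i _
              exact mul_le_mul_of_nonneg_left (hDM i) ENNReal.toReal_nonneg
          _ = M := by rw [← Finset.sum_mul, pmf_fin_sum_toReal, one_mul]
      have : D s = (Vstar ω s - Qstar ω s (π s)) + (Qstar ω s (π s) - Vπ ω s) := by ring
      rw [this, h1]
      have := mul_le_mul_of_nonneg_left h2 (le_of_lt hγ0)
      linarith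
    -- c ≤ M
    have hcM : c ≤ M := by
      have : R ω ≤ M := by
        rw [hR]
        calc ∑ s₀, (ρ s₀).toReal * (Vstar ω s₀ - Vπ ω s₀)
            ≤ ∑ s₀, (ρ s₀).toReal * M := by
              apply Finset.sum_le_sum
              intro i _
              exact mul_le_mul_of_nonneg_left (hDM i) ENNReal.toReal_nonneg
          _ = M := by rw [← Finset.sum_mul, pmf_fin_sum_toReal, one_mul]
      linarith
    obtain ⟨s₀, -, hs₀⟩ := Finset.exists_mem_eq_sup' Finset.univ_nonempty D
    refine ⟨s₀, ?_⟩
    have hDs₀ : D s₀ = M := hs₀.symm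
    have := hstep s₀
    rw [hDs₀] at this
    have hgap : (1 - γ) * M ≤ Vstar ω s₀ - Qstar ω s₀ (π s₀) := by linarith
    have : (1 - γ) * c ≤ (1 - γ) * M :=
      mul_le_mul_of_nonneg_left hcM (by linarith)
    linarith
  -- union bound
  set Aset : S → Set Ω := fun s => {ω | Vstar ω s - Qstar ω s (π s) ≥ (1 - γ) * c}
  have hsub : {ω | R ω ≥ c} ⊆ ⋃ s, Aset s := by
    intro ω hω
    obtain ⟨s, hs⟩ := key ω hω
    exact Set.mem_iUnion.mpr ⟨s, hs⟩
  have hmeas : μ {ω | R ω ≥ c} ≤ ∑ s, μ (Aset s) :=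
    le_trans (measure_mono hsub) (measure_iUnion_fintype_le μ Aset)
  have htoReal : (μ {ω | R ω ≥ c}).toReal ≤ ∑ s, (μ (Aset s)).toReal := by
    have hfin : ∀ s ∈ Finset.univ, μ (Aset s) ≠ ⊤ :=
      fun s _ => measure_ne_top μ _
    rw [← ENNReal.toReal_sum hfin]
    exact ENNReal.toReal_mono (by rw [ENNReal.sum_ne_top]; exact fun a _ => measure_ne_top μ _) hmeas
  by_contra hcon
  push_neg at hcon
  have hcard : (0 : ℝ) < (Fintype.card S : ℝ) := by
    exact_mod_cast Fintype.card_pos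
  have hsum : ∑ s, (μ (Aset s)).toReal < ∑ _s : S, δ / (Fintype.card S : ℝ) := by
    apply Finset.sum_lt_sum_of_nonempty Finset.univ_nonempty
    intro i _
    exact hcon i
  rw [Finset.sum_const, Finset.card_univ, nsmul_eq_mul] at hsum
  have : (Fintype.card S : ℝ) * (δ / (Fintype.card S : ℝ)) = δ := by
    field_simp
  linarith
end

section
/- Let A be a finite nonempty set, β ≥ 0, Q : A → ℝ, and define the Boltzmann-rational policy π(a) = exp(β·Q(a)) / Σ_{a''∈A} exp(β·Q(a'')). If a, a' ∈ A and c ≥ 0 satisfy Q(a') ≥ Q(a) + c, then π(a') − π(a) ≥ (1 − exp(−β·c))·π(a'). -/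
/-- Under a Boltzmann-rational policy, if `Q(a') ≥ Q(a) + c` with `c ≥ 0`, then
`π(a') - π(a) ≥ (1 - exp(-β·c))·π(a')`. -/
theorem boltzmann_diff_ge
    {A : Type*} [Fintype A] [Nonempty A]
    (β : ℝ) (hβ : 0 ≤ β) (Q : A → ℝ)
    (π : A → ℝ)
    (hπ : ∀ a, π a = Real.exp (β * Q a) / ∑ a'' : A, Real.exp (β * Q a''))
    (a a' : A) (c : ℝ) (hc : 0 ≤ c) (h : Q a' ≥ Q a + c) :
    π a' - π a ≥ (1 - Real.exp (-(β * c))) * π a' := by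
  have hS : (0:ℝ) < ∑ a'' : A, Real.exp (β * Q a'') :=
    Finset.sum_pos (fun i _ => Real.exp_pos _) Finset.univ_nonempty
  have key : π a ≤ Real.exp (-(β * c)) * π a' := by
    rw [hπ a, hπ a', ← mul_div_assoc, ← Real.exp_add]
    gcongr
    nlinarith
  nlinarith
end
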